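/- arXiv:1906.06733 — 4 statements merged into one kernel-verified Lean document; each statement's English description precedes it below -/
import Mathlib

section
/- Let τ be a finite group whose order is divisible by p. Then: (i) A_τ is reduced; (ii) A_τ is a finitely generated k-algebra; (iii) A_τ is a graded subalgebra of ∏_{E ∈ E(τ)} S•(J_E*), i.e. for any element (f_E) of A_τ and any n ≥ 0 the family of degree-n homogeneous components of the f_E again lies in A_τ; and (iv) if E_1, …, E_s are the maximal elements of the poset E(τ), then the projection A_τ → ∏_{i=1}^s S•(J_{E_i}*) onto the components indexed by the maximal elementary abelian p-subgroups is an injective k-algebra homomorphism. -/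
/-!
Statement 0.  `k` is a field of characteristic `p > 0`, `τ` a finite group of order
divisible by `p`.  `A_τ` is the inverse limit of the symmetric algebras `S^•(J_E^*)`
over the poset `𝓔(τ)` of elementary abelian `p`-subgroups `E ⊆ τ`.  Here `S^•(J_E^*)`
is modelled as the polynomial algebra on the basis `{(g-e)^∨ : e ≠ g ∈ E}` of `J_E^*`
dual to the canonical basis `{g - e : e ≠ g ∈ E}` of the augmentation ideal `J_E ⊆ kE`;
the restriction map `S^•(J_E^*) → S^•(J_{E'}^*)` (dual to the inclusion `J_{E'} ⊆ J_E`)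
sends `(g-e)^∨` to `(g-e)^∨` if `g ∈ E'` and to `0` otherwise.

Claims: (i) `A_τ` is reduced; (ii) `A_τ` is a finitely generated `k`-algebra;
(iii) `A_τ` is a graded subalgebra of `∏_E S^•(J_E^*)`; (iv) the projection of `A_τ`
onto the components indexed by the maximal elementary abelian `p`-subgroups is an
injective `k`-algebra homomorphism.
-/

open MvPolynomial TensorProduct

set_option synthInstance.maxHeartbeats 1000000
set_option maxHeartbeats 1600000
set_option linter.unusedSectionVars false

attribute [local instance] Classical.propDecidable

noncomputable section

/-- A subgroup `E` of `τ` is an *elementary abelian `p`-subgroup* if it is commutative and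
every element has order dividing `p`. -/
def IsElemAb {τ : Type} [Group τ] (p : ℕ) (E : Subgroup τ) : Prop :=
  (∀ g ∈ E, g ^ p = 1) ∧ ∀ g ∈ E, ∀ h ∈ E, g * h = h * g

/-- The poset `𝓔(τ)` of elementary abelian `p`-subgroups of `τ`, ordered by inclusion. -/
abbrev ElemAb (τ : Type) [Group τ] (p : ℕ) := {E : Subgroup τ // IsElemAb p E}

variable (k : Type) [Field k] (τ : Type) [Group τ] [Fintype τ] (p : ℕ)

/-- The index set `{g ∈ E : g ≠ 1}` of the canonical basis `{g - e}` of `J_E`. -/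
def Idx (E : ElemAb τ p) : Type := {g : τ // g ∈ E.1 ∧ g ≠ 1}

/-- The model for the symmetric algebra `S^•(J_E^*)`. -/
abbrev SJ (E : ElemAb τ p) := MvPolynomial (Idx τ p E) k

/-- The restriction map `S^•(J_E^*) → S^•(J_{E'}^*)` induced by the surjection
`J_E^* → J_{E'}^*` dual to the inclusion `J_{E'} ⊆ J_E`. -/
def res {E' E : ElemAb τ p} (_ : E' ≤ E) : SJ k τ p E →ₐ[k] SJ k τ p E' :=
  aeval fun g => if hg : g.1 ∈ E'.1 then X ⟨g.1, hg, g.2.2⟩ else 0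

/-- `A_τ`: the subalgebra of `∏_{E ∈ 𝓔(τ)} S^•(J_E^*)` of families compatible with all
restriction maps. -/
def Atau : Subalgebra k (∀ E : ElemAb τ p, SJ k τ p E) where
  carrier := {f | ∀ (E' E : ElemAb τ p) (h : E' ≤ E), res k τ p h (f E) = f E'}
  mul_mem' := fun ha hb E' E h => by
    simp only [Pi.mul_apply, map_mul]; rw [ha E' E h, hb E' E h]
  add_mem' := fun ha hb E' E h => by
    simp only [Pi.add_apply, map_add]; rw [ha E' E h, hb E' E h]
  algebraMap_mem' := fun r E' E h => by
    simp only [Pi.algebraMap_apply]; exact (res k τ p h).commutes r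

/-- The projection of `A_τ` onto the components indexed by the maximal elementary
abelian `p`-subgroups. -/
def projMax : ↥(Atau k τ p) →ₐ[k] (∀ E : {E : ElemAb τ p // IsMax E}, SJ k τ p E.1) :=
  Pi.algHom k _ fun E => (Pi.evalAlgHom k _ E.1).comp (Atau k τ p).val

/-!
Every compatible family comes from one polynomial in the variables `X_g`, `e ≠ g ∈ τ`:
restricting a global polynomial to `E` kills the variables outside `E`, and the coefficient
of a monomial `d` can be read off consistently at the subgroup generated by the variables
occurring in `d`, which is elementary abelian as soon as `d` occurs in some `f_E`. Hence `A_τ`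
is generated by the finitely many families `(X_g if g ∈ E else 0)_E`. The restriction maps
send variables to variables or to `0`, so they preserve degrees, and every `E` lies below a
maximal one, so the maximal components determine the family.
-/

lemma IsElemAb.mono {τ : Type} [Group τ] {p : ℕ} {E H : Subgroup τ} (hE : IsElemAb p E)
    (hHE : H ≤ E) : IsElemAb p H :=
  ⟨fun g hg => hE.1 g (hHE hg), fun g hg h hh => hE.2 g (hHE hg) h (hHE hh)⟩

lemma MvPolynomial.aeval_homogeneousComponent {σ ι R : Type*} [CommSemiring R]
    {g : σ → MvPolynomial ι R} (hg : ∀ i, (g i).IsHomogeneous 1) (n : ℕ)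
    (q : MvPolynomial σ R) :
    aeval g (homogeneousComponent n q) = homogeneousComponent n (aeval g q) := by
  induction q using MvPolynomial.induction_on' with
  | monomial d c =>
    have hd : (aeval g (monomial d c)).IsHomogeneous d.degree := by
      simpa using (isHomogeneous_monomial c rfl).aeval g hg
    rw [homogeneousComponent_of_mem (isHomogeneous_monomial c rfl),
      homogeneousComponent_of_mem hd]
    split_ifs <;> simp
  | add q r hq hr => simp only [map_add, hq, hr]

section Generators

abbrev Var (τ : Type) [Group τ] : Type := {g : τ // g ≠ 1}

def varFamily (g : Var τ) : ∀ E : ElemAb τ p, SJ k τ p E := fun E =>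
  if h : g.1 ∈ E.1 then X ⟨g.1, h, g.2⟩ else 0

def toGlobal (E : ElemAb τ p) : SJ k τ p E →ₐ[k] MvPolynomial (Var τ) k :=
  rename fun i => ⟨i.1, i.2.2⟩

def killOutside (k : Type) [CommSemiring k] {τ : Type} [Group τ] (E : Subgroup τ) :
    MvPolynomial (Var τ) k →ₐ[k] MvPolynomial (Var τ) k :=
  aeval fun g => if g.1 ∈ E then X g else 0

def supportSubgroup {τ : Type} [Group τ] (d : Var τ →₀ ℕ) : Subgroup τ :=
  Subgroup.closure (Subtype.val '' (d.support : Set (Var τ)))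

variable {k τ p}

@[simp]
lemma res_X {E' E : ElemAb τ p} (h : E' ≤ E) (g : τ) (hg : g ∈ E.1 ∧ g ≠ 1) :
    res k τ p h (X ⟨g, hg⟩) = if hg' : g ∈ E'.1 then X ⟨g, hg', hg.2⟩ else 0 :=
  aeval_X _ _

@[simp]
lemma toGlobal_X (E : ElemAb τ p) (g : τ) (hg : g ∈ E.1 ∧ g ≠ 1) :
    toGlobal k τ p E (X ⟨g, hg⟩) = X ⟨g, hg.2⟩ :=
  rename_X _ _

@[simp]
lemma killOutside_X (E : Subgroup τ) (g : Var τ) :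
    killOutside k E (X g) = if g.1 ∈ E then X g else 0 :=
  aeval_X _ _

lemma varFamily_mem_Atau (g : Var τ) : varFamily k τ p g ∈ Atau k τ p := by
  intro E' E h
  simp only [varFamily]
  by_cases h' : g.1 ∈ E'.1
  · rw [dif_pos (h h'), dif_pos h']
    exact (res_X h g.1 ⟨h h', g.2⟩).trans (dif_pos h')
  · rw [dif_neg h']
    split_ifs with hE
    · exact (res_X h g.1 ⟨hE, g.2⟩).trans (dif_neg h')
    · rw [map_zero]

lemma toGlobal_injective (E : ElemAb τ p) : Function.Injective (toGlobal k τ p E) :=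
  rename_injective _ fun _ _ h => Subtype.ext (congrArg (Subtype.val : Var τ → τ) h)

lemma toGlobal_res {E' E : ElemAb τ p} (h : E' ≤ E) (q : SJ k τ p E) :
    toGlobal k τ p E' (res k τ p h q) = killOutside k E'.1 (toGlobal k τ p E q) := by
  suffices (toGlobal k τ p E').comp (res k τ p h) =
      (killOutside k E'.1).comp (toGlobal k τ p E) from DFunLike.congr_fun this q
  refine algHom_ext fun ⟨g, hg⟩ => ?_
  simp only [AlgHom.comp_apply, res_X, toGlobal_X, killOutside_X]
  split_ifs <;> simp

lemma killOutside_toGlobal (E : ElemAb τ p) (q : SJ k τ p E) :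
    killOutside k E.1 (toGlobal k τ p E q) = toGlobal k τ p E q := by
  suffices (killOutside k E.1).comp (toGlobal k τ p E) = toGlobal k τ p E from
    DFunLike.congr_fun this q
  refine algHom_ext fun ⟨g, hg⟩ => ?_
  simp [hg.1]

lemma toGlobal_aeval_varFamily (E : ElemAb τ p) (P : MvPolynomial (Var τ) k) :
    toGlobal k τ p E (aeval (varFamily k τ p) P E) = killOutside k E.1 P := by
  suffices (toGlobal k τ p E).comp ((Pi.evalAlgHom k _ E).comp (aeval (varFamily k τ p))) =
      killOutside k E.1 from DFunLike.congr_fun this P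
  refine algHom_ext fun g => ?_
  simp only [AlgHom.comp_apply, aeval_X, Pi.evalAlgHom_apply, varFamily, killOutside_X]
  split_ifs <;> simp

lemma killOutside_monomial {k : Type} [CommSemiring k] {τ : Type} [Group τ] (E : Subgroup τ)
    (d : Var τ →₀ ℕ) (c : k) :
    killOutside k E (monomial d c) = if ∀ g ∈ d.support, g.1 ∈ E then monomial d c else 0 := by
  rw [killOutside, aeval_monomial]
  split_ifs with h
  · rw [monomial_eq, algebraMap_eq, Finsupp.prod_congr fun g hg => by rw [if_pos (h g hg)]]
  · push Not at h
    obtain ⟨g, hg, hgE⟩ := h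
    rw [Finsupp.prod, Finset.prod_eq_zero hg (by rw [if_neg hgE,
      zero_pow (Finsupp.mem_support_iff.1 hg)]), mul_zero]

lemma coeff_killOutside {k : Type} [CommSemiring k] {τ : Type} [Group τ] (E : Subgroup τ)
    (q : MvPolynomial (Var τ) k) (d : Var τ →₀ ℕ) :
    coeff d (killOutside k E q) = if ∀ g ∈ d.support, g.1 ∈ E then coeff d q else 0 := by
  induction q using MvPolynomial.induction_on' with
  | monomial d' c =>
    rw [killOutside_monomial]
    by_cases hd : d' = d
    · subst hd
      split_ifs <;> simp
    · split_ifs <;> simp [coeff_monomial, hd]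
  | add q r hq hr => rw [map_add, coeff_add, hq, hr, coeff_add]; split_ifs <;> simp

lemma coeff_toGlobal_eq_zero {E : ElemAb τ p} (q : SJ k τ p E) {d : Var τ →₀ ℕ}
    (hd : ¬ ∀ g ∈ d.support, g.1 ∈ E.1) : coeff d (toGlobal k τ p E q) = 0 := by
  rw [← killOutside_toGlobal, coeff_killOutside, if_neg hd]

lemma coeff_toGlobal_of_le {f : ∀ E : ElemAb τ p, SJ k τ p E} (hf : f ∈ Atau k τ p)
    {E' E : ElemAb τ p} (h : E' ≤ E) {d : Var τ →₀ ℕ} (hd : ∀ g ∈ d.support, g.1 ∈ E'.1) :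
    coeff d (toGlobal k τ p E (f E)) = coeff d (toGlobal k τ p E' (f E')) := by
  rw [← hf E' E h, toGlobal_res, coeff_killOutside, if_pos hd]

lemma exists_aeval_varFamily_eq {f : ∀ E : ElemAb τ p, SJ k τ p E} (hf : f ∈ Atau k τ p) :
    ∃ P : MvPolynomial (Var τ) k, aeval (varFamily k τ p) P = f := by
  have : Fintype (ElemAb τ p) := Fintype.ofFinite _
  set F : ∀ E : ElemAb τ p, MvPolynomial (Var τ) k := fun E => toGlobal k τ p E (f E)
  let c : (Var τ →₀ ℕ) → k := fun d =>
    if h : IsElemAb p (supportSubgroup d) then coeff d (F ⟨_, h⟩) else 0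
  have hc : ∀ (E : ElemAb τ p) d, (∀ g ∈ d.support, g.1 ∈ E.1) → c d = coeff d (F E) := by
    intro E d hd
    have hle : supportSubgroup d ≤ E.1 :=
      (Subgroup.closure_le _).2 (by rintro _ ⟨g, hg, rfl⟩; exact hd g hg)
    have helem := E.2.mono hle
    rw [show c d = coeff d (F ⟨_, helem⟩) from dif_pos helem,
      coeff_toGlobal_of_le hf (E' := ⟨_, helem⟩) hle]
    exact fun g hg => Subgroup.subset_closure ⟨g, hg, rfl⟩
  refine ⟨∑ d ∈ Finset.univ.biUnion fun E => (F E).support, monomial d (c d), ?_⟩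
  funext E
  apply toGlobal_injective
  ext d
  rw [toGlobal_aeval_varFamily, coeff_killOutside, coeff_sum]
  simp only [coeff_monomial, Finset.sum_ite_eq']
  split_ifs with hdE hD
  · exact hc E d hdE
  · refine (notMem_support_iff.1 fun h => hD ?_).symm
    exact Finset.mem_biUnion.2 ⟨E, Finset.mem_univ _, h⟩
  · exact (coeff_toGlobal_eq_zero _ hdE).symm

end Generators

lemma Atau_eq_adjoin_range_varFamily :
    Atau k τ p = Algebra.adjoin k (Set.range (varFamily k τ p)) := by
  refine le_antisymm (fun f hf => ?_) ((Algebra.adjoin_le_iff).2 ?_)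
  · rw [Algebra.adjoin_range_eq_range_aeval]
    exact exists_aeval_varFamily_eq hf
  · rintro _ ⟨g, rfl⟩
    exact varFamily_mem_Atau g

lemma Atau_fg : (Atau k τ p).FG := by
  have : Fintype (Var τ) := Fintype.ofFinite _
  refine ⟨Finset.univ.image (varFamily k τ p), ?_⟩
  rw [Finset.coe_image, Finset.coe_univ, Set.image_univ, Atau_eq_adjoin_range_varFamily]

section Grading

variable {k τ p}

lemma res_homogeneousComponent {E' E : ElemAb τ p} (h : E' ≤ E) (n : ℕ) (q : SJ k τ p E) :
    res k τ p h (homogeneousComponent n q) = homogeneousComponent n (res k τ p h q) :=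
  aeval_homogeneousComponent
    (fun _ => by split_ifs; exacts [isHomogeneous_X _ _, isHomogeneous_zero _ _ _]) n q

lemma homogeneousComponent_mem_Atau {f : ∀ E : ElemAb τ p, SJ k τ p E}
    (hf : f ∈ Atau k τ p) (n : ℕ) :
    (fun E : ElemAb τ p => homogeneousComponent n (f E)) ∈ Atau k τ p := fun E' E h => by
  rw [res_homogeneousComponent, hf E' E h]

end Grading

lemma projMax_injective : Function.Injective (projMax k τ p) := by
  refine (injective_iff_map_eq_zero _).2 fun f hf => Subtype.ext <| funext fun E => ?_
  obtain ⟨M, hEM, hM⟩ := Finite.exists_le_maximal (p := fun _ : ElemAb τ p => True) trivial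
  rw [← f.2 E M hEM, show f.1 M = 0 from congrFun hf ⟨M, fun _ h => hM.2 trivial h⟩,
    map_zero]
  rfl

theorem geometric_invariants_stmt0_general {p : ℕ}
    (k : Type) [Field k]
    (τ : Type) [Group τ] [Fintype τ] :
    -- (i) `A_τ` is reduced
    IsReduced ↥(Atau k τ p) ∧
    -- (ii) `A_τ` is a finitely generated `k`-algebra
    (Atau k τ p).FG ∧
    -- (iii) `A_τ` is a graded subalgebra of `∏_E S^•(J_E^*)`: taking degree-`n`
    -- homogeneous components componentwise preserves membership in `A_τ`
    (∀ f ∈ Atau k τ p, ∀ n : ℕ,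
      (fun E : ElemAb τ p => homogeneousComponent n (f E)) ∈ Atau k τ p) ∧
    -- (iv) the projection onto the maximal components is injective (it is a `k`-algebra
    -- homomorphism by construction)
    Function.Injective (projMax k τ p) :=
  ⟨isReduced_of_injective (Atau k τ p).val Subtype.val_injective, Atau_fg k τ p,
    fun _ hf n => homogeneousComponent_mem_Atau hf n, projMax_injective k τ p⟩

theorem geometric_invariants_stmt0 {p : ℕ} [Fact p.Prime]
    (k : Type) [Field k] [CharP k p]
    (τ : Type) [Group τ] [Fintype τ] (hdvd : p ∣ Fintype.card τ) :
    -- (i) `A_τ` is reduced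
    IsReduced ↥(Atau k τ p) ∧
    -- (ii) `A_τ` is a finitely generated `k`-algebra
    (Atau k τ p).FG ∧
    -- (iii) `A_τ` is a graded subalgebra of `∏_E S^•(J_E^*)`: taking degree-`n`
    -- homogeneous components componentwise preserves membership in `A_τ`
    (∀ f ∈ Atau k τ p, ∀ n : ℕ,
      (fun E : ElemAb τ p => homogeneousComponent n (f E)) ∈ Atau k τ p) ∧
    -- (iv) the projection onto the maximal components is injective (it is a `k`-algebra
    -- homomorphism by construction)
    Function.Injective (projMax k τ p) :=
  geometric_invariants_stmt0_general k τ
end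
end

section
/- Let V be a finite-dimensional vector space over a field k with basis B, and let {B_i}_{i ∈ I} be a finite family of subsets of B that is closed under pairwise intersection (if B_i and B_j belong to the family then so does B_i ∩ B_j); set V_i := span(B_i). Then the restriction maps S•(V*) → S•(V_i*) are jointly surjective onto compatible families: for every family (f_i)_{i∈I} with f_i ∈ S•(V_i*) such that whenever V_j ⊆ V_i the restriction map S•(V_i*) → S•(V_j*) sends f_i to f_j, there exists F ∈ S•(V*) whose restriction to S•(V_i*) equals f_i for every i ∈ I. -/
/-!
Statement 2 (coordinate-subspace form of Proposition 2.2(3)).  `V` is a finite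
dimensional `k`-vector space with basis `B` (modelled by its index set `ι`), and
`{B_i}_{i ∈ I}` is a finite family of subsets of `B`, closed under pairwise
intersection; `V_i = span B_i`.  The symmetric algebra `S^•(V^*)` is modelled as the
polynomial algebra `k[X_b : b ∈ B]` on the dual basis, and likewise
`S^•(V_i^*) = k[X_b : b ∈ B_i]`; the restriction map `S^•(V^*) → S^•(V_i^*)`
(dual to the inclusion `V_i ⊆ V`) sends `X_b` to `X_b` if `b ∈ B_i` and to `0`
otherwise, and similarly for `V_j ⊆ V_i` (which for spans of subsets of a basis is
equivalent to `B_j ⊆ B_i`).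

Claim: every family `(f_i)` compatible with the restriction maps is the common
restriction of a single `F ∈ S^•(V^*)`.
-/

open MvPolynomial

attribute [local instance] Classical.propDecidable

noncomputable section

variable (k : Type) [Field k] (ι : Type)

/-- Restriction `S^•(V^*) → S^•(V_t^*)` for a coordinate subspace `V_t = span {b ∈ t}`. -/
def resTotal (t : Set ι) : MvPolynomial ι k →ₐ[k] MvPolynomial t k :=
  aeval fun b => if hb : b ∈ t then X (⟨b, hb⟩ : t) else 0

/-- Restriction `S^•(V_t^*) → S^•(V_{t'}^*)` for nested coordinate subspaces
`V_{t'} ⊆ V_t`. -/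
def resSub {t' t : Set ι} (_ : t' ⊆ t) : MvPolynomial t k →ₐ[k] MvPolynomial t' k :=
  aeval fun b => if hb : b.1 ∈ t' then X (⟨b.1, hb⟩ : t') else 0

/-!
Pull the problem back to `k[X_b : b ∈ B]`: via `rename`, `S^•(V_t^*)` is the image of
the projection `π_t = truncVars t` killing every monomial that involves a variable
outside `t`, and these projections satisfy `π_t ∘ π_{t'} = π_{t ∩ t'}`. Glue the family
one index at a time: if `F` already restricts correctly on the sets seen so far, then
`F + f_i - π_{B_i} F` restricts to `f_i` on `B_i`, and on an earlier `B_j` the correction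
`f_i - π_{B_i} F` restricts to `π_{B_i ∩ B_j} (f_i - F) = 0` because `B_i ∩ B_j` is again
in the family.
-/

section Gluing

variable {α M I : Type*} [SemilatticeInf α] [AddCommGroup M]

theorem exists_forall_mem_apply_eq_of_compatible (p : α → M →+ M)
    (hp : ∀ a b x, p a (p b x) = p (a ⊓ b) x)
    (s : I → α) (hinter : ∀ i j, ∃ l, s l = s i ⊓ s j)
    (g : I → M) (hg : ∀ i j, s j ≤ s i → p (s j) (g i) = g j) (A : Finset I) :
    ∃ F : M, ∀ i ∈ A, p (s i) F = g i := by
  induction A using Finset.induction_on with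
  | empty => exact ⟨0, by simp⟩
  | @insert i A _ ih =>
    obtain ⟨F, hF⟩ := ih
    refine ⟨F + g i - p (s i) F, fun j hj => ?_⟩
    rcases Finset.mem_insert.mp hj with rfl | hjA
    · rw [map_sub, map_add, hp, inf_idem, hg j j le_rfl, add_sub_cancel_left]
    obtain ⟨l, hl⟩ := hinter j i
    have hlj : s l ≤ s j := hl ▸ inf_le_left
    have hli : s l ≤ s i := hl ▸ inf_le_right
    have hgi : p (s j) (g i) = g l := by
      rw [← hg i i le_rfl, hp, ← hl, hg i l hli]
    have hFl : p (s l) F = g l := by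
      rw [← inf_eq_left.mpr hlj, ← hp, hF j hjA, hg j l hlj]
    rw [map_sub, map_add, hF j hjA, hgi, hp, ← hl, hFl, add_sub_cancel_right]

end Gluing

variable {k ι}

def truncVars (t : Set ι) : MvPolynomial ι k →ₐ[k] MvPolynomial ι k :=
  (rename (Subtype.val : t → ι)).comp (resTotal k ι t)

theorem truncVars_X (t : Set ι) (b : ι) :
    truncVars t (X b : MvPolynomial ι k) = if b ∈ t then X b else 0 := by
  simp only [truncVars, resTotal, AlgHom.comp_apply, aeval_X]
  split_ifs <;> simp

theorem truncVars_truncVars (t t' : Set ι) (p : MvPolynomial ι k) :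
    truncVars t (truncVars t' p) = truncVars (t ⊓ t') p := by
  change ((truncVars t).comp (truncVars t')) p = _
  congr 1
  refine algHom_ext fun b => ?_
  by_cases hb : b ∈ t <;> by_cases hb' : b ∈ t' <;> simp [truncVars_X, hb, hb']

theorem rename_resSub {t' t : Set ι} (h : t' ⊆ t) (p : MvPolynomial t k) :
    rename Subtype.val (resSub k ι h p) = truncVars t' (rename Subtype.val p) := by
  change ((rename Subtype.val).comp (resSub k ι h)) p =
    ((truncVars t').comp (rename Subtype.val)) p
  congr 1
  refine algHom_ext fun b => ?_
  simp only [AlgHom.comp_apply, resSub, aeval_X, rename_X, truncVars_X]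
  split_ifs <;> simp

theorem geometric_invariants_stmt2_general
    (k : Type) [Field k] (ι : Type)
    (I : Type) [Fintype I] (s : I → Set ι)
    (hinter : ∀ i j : I, ∃ l : I, s l = s i ∩ s j)
    (f : ∀ i : I, MvPolynomial (s i) k)
    (hcompat : ∀ (i j : I) (h : s j ⊆ s i), resSub k ι h (f i) = f j) :
    ∃ F : MvPolynomial ι k, ∀ i : I, resTotal k ι (s i) F = f i := by
  obtain ⟨F, hF⟩ := exists_forall_mem_apply_eq_of_compatible
    (fun t => (truncVars t).toLinearMap.toAddMonoidHom)
    truncVars_truncVars s hinter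
    (fun i => rename Subtype.val (f i))
    (fun i j h => (rename_resSub h (f i)).symm.trans (congrArg _ (hcompat i j h)))
    Finset.univ
  exact ⟨F, fun i => rename_injective _ Subtype.val_injective (hF i (Finset.mem_univ i))⟩

theorem geometric_invariants_stmt2
    (k : Type) [Field k] (ι : Type) [Fintype ι]
    (I : Type) [Fintype I] (s : I → Set ι)
    (hinter : ∀ i j : I, ∃ l : I, s l = s i ∩ s j)
    (f : ∀ i : I, MvPolynomial (s i) k)
    (hcompat : ∀ (i j : I) (h : s j ⊆ s i), resSub k ι h (f i) = f j) :
    ∃ F : MvPolynomial ι k, ∀ i : I, resTotal k ι (s i) F = f i :=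
  geometric_invariants_stmt2_general k ι I s hinter f hcompat
end
end

section
/- Let τ be a finite group and M a kτ-module. Then Θ_{τ,M} is τ-equivariant: for all x ∈ τ and all v ∈ A_τ ⊗_k M one has Θ_{τ,M}(x·v) = x·Θ_{τ,M}(v). In other words, Θ_{τ,M} is an endomorphism of A_τ ⊗_k M which is simultaneously A_τ-linear and commutes with the diagonal τ-action. -/
open MvPolynomial TensorProduct

set_option synthInstance.maxHeartbeats 1000000
set_option maxHeartbeats 1600000
set_option linter.unusedSectionVars false

attribute [local instance] Classical.propDecidable

noncomputable section

variable (k : Type) [Field k] (τ : Type) [Group τ] [Fintype τ] (p : ℕ)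

/-- The family `(g - e)^∨ ∈ ∏_E S^•(J_E^*)`: its `E`-component is the dual basis
functional `(g-e)^∨` if `g ∈ E`, `g ≠ e`, and `0` otherwise. -/
def dualElt (g : τ) : ∀ E : ElemAb τ p, SJ k τ p E :=
  fun E => if h : g ∈ E.1 ∧ g ≠ 1 then X ⟨g, h⟩ else 0

lemma dualElt_mem (g : τ) : dualElt k τ p g ∈ Atau k τ p := by
  intro E' E h
  by_cases hgE : g ∈ E.1 ∧ g ≠ 1
  · by_cases hgE' : g ∈ E'.1
    · simp only [dualElt, dif_pos hgE, dif_pos (And.intro hgE' hgE.2), res]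
      erw [aeval_X]
      exact dif_pos hgE'
    · have : ¬ (g ∈ E'.1 ∧ g ≠ 1) := fun hc => hgE' hc.1
      simp only [dualElt, dif_pos hgE, dif_neg this, res]
      erw [aeval_X]
      exact dif_neg hgE'
  · have hgE' : ¬ (g ∈ E'.1 ∧ g ≠ 1) := by
      intro hc; exact hgE ⟨h hc.1, hc.2⟩
    simp [dualElt, hgE, hgE']

/-- The coordinate ring `A_τ` as a type. -/
abbrev Rt := ↥(Atau k τ p)

/-- The conjugate `x⁻¹ E x` of an elementary abelian `p`-subgroup (realized as the
preimage of `E` under conjugation by `x`). -/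
def conjE (x : τ) (E : ElemAb τ p) : ElemAb τ p :=
  ⟨E.1.comap (MulAut.conj x).toMonoidHom, by
    obtain ⟨h1, h2⟩ := E.2
    constructor
    · intro g hg
      rw [Subgroup.mem_comap] at hg
      have := h1 _ hg
      simp only [MulEquiv.coe_toMonoidHom, MulAut.conj_apply] at this
      rw [conj_pow] at this
      have : g ^ p = x⁻¹ * (x * g ^ p * x⁻¹) * x := by group
      rw [‹x * _ * x⁻¹ = 1›] at this
      simpa using this
    · intro g hg h hh
      rw [Subgroup.mem_comap] at hg hh
      have := h2 _ hg _ hh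
      simp only [MulEquiv.coe_toMonoidHom, MulAut.conj_apply] at this
      have h3 : x * (g * h) * x⁻¹ = x * (h * g) * x⁻¹ := by
        calc x * (g * h) * x⁻¹ = (x * g * x⁻¹) * (x * h * x⁻¹) := by group
        _ = (x * h * x⁻¹) * (x * g * x⁻¹) := this
        _ = x * (h * g) * x⁻¹ := by group
      have := congrArg (fun z => x⁻¹ * z * x) h3
      simpa [mul_assoc] using this⟩

/-- Reindexing of variables along conjugation: `h ↦ x h x⁻¹`.  This realizes the dual of
the `k`-linear isomorphism `J_E → J_{x⁻¹Ex}`, `g - e ↦ x⁻¹gx - e`, on dual bases. -/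
def conjIdx (x : τ) (E : ElemAb τ p) (h : Idx τ p (conjE τ p x E)) : Idx τ p E :=
  ⟨x * h.1 * x⁻¹, by
    have := Subgroup.mem_comap.mp h.2.1
    simpa using this, by
    intro hc
    apply h.2.2
    have : h.1 = x⁻¹ * (x * h.1 * x⁻¹) * x := by group
    rw [hc] at this; simpa using this⟩

/-- The action of `x ∈ τ` on families: the `E`-component of `x · f` is the image of
`f_{x⁻¹Ex}` under the `k`-algebra isomorphism `S^•(J_{x⁻¹Ex}^*) → S^•(J_E^*)` dual to
the `k`-linear isomorphism `J_E → J_{x⁻¹Ex}`, `g - e ↦ x⁻¹gx - e`. -/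
def actFun (x : τ) (f : ∀ E : ElemAb τ p, SJ k τ p E) : ∀ E : ElemAb τ p, SJ k τ p E :=
  fun E => rename (conjIdx τ p x E) (f (conjE τ p x E))

lemma actFun_mem (x : τ) (f : ∀ E : ElemAb τ p, SJ k τ p E) (hf : f ∈ Atau k τ p) :
    actFun k τ p x f ∈ Atau k τ p := by
  intro E' E h
  have hle : conjE τ p x E' ≤ conjE τ p x E := by
    intro g hg
    exact Subgroup.mem_comap.mpr (h (Subgroup.mem_comap.mp hg))
  have key : (res k τ p h).comp (rename (conjIdx τ p x E) :
        SJ k τ p (conjE τ p x E) →ₐ[k] SJ k τ p E)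
      = (rename (conjIdx τ p x E') :
          SJ k τ p (conjE τ p x E') →ₐ[k] SJ k τ p E').comp (res k τ p hle) := by
    apply MvPolynomial.algHom_ext
    intro u
    by_cases hc : x * u.1 * x⁻¹ ∈ E'.1
    · have hc' : u.1 ∈ (conjE τ p x E').1 := Subgroup.mem_comap.mpr (by simpa using hc)
      have h2 : (conjIdx τ p x E u).1 ∈ E'.1 := hc
      simp only [AlgHom.coe_comp, Function.comp_apply, rename_X, res, aeval_X]
      rw [dif_pos h2, dif_pos hc']
      erw [rename_X]
      congr 1
    · have hc' : ¬ u.1 ∈ (conjE τ p x E').1 :=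
        fun hm => hc (by simpa using Subgroup.mem_comap.mp hm)
      have h2 : ¬ (conjIdx τ p x E u).1 ∈ E'.1 := hc
      simp only [AlgHom.coe_comp, Function.comp_apply, rename_X, res, aeval_X]
      rw [dif_neg h2, dif_neg hc']
      simp
  have := AlgHom.congr_fun key (f (conjE τ p x E))
  simpa [actFun, hf _ _ hle] using this

/-- The action of `x ∈ τ` on `A_τ` as a `k`-algebra homomorphism. -/
def actAlg (x : τ) : Rt k τ p →ₐ[k] Rt k τ p where
  toFun f := ⟨actFun k τ p x f.1, actFun_mem k τ p x f.1 f.2⟩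
  map_one' := by
    apply Subtype.ext; funext E
    simp [actFun]
  map_mul' a b := by
    apply Subtype.ext; funext E
    simp [actFun, map_mul]
  map_zero' := by
    apply Subtype.ext; funext E
    simp [actFun]
  map_add' a b := by
    apply Subtype.ext; funext E
    simp [actFun, map_add]
  commutes' r := by
    apply Subtype.ext; funext E
    simp [actFun, Algebra.algebraMap_eq_smul_one, Pi.smul_apply]

variable {M : Type} [AddCommGroup M] [Module k M]

/-- The universal operator `Θ_{τ,M}`: the `A_τ`-linear endomorphism of `A_τ ⊗_k M`
determined by `Θ_{τ,M}(1 ⊗ m) = ∑_{g ∈ τ, g^p = e, g ≠ e} (g-e)^∨ ⊗ (g·m - m)`. -/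
def theta (ρ : Representation k τ M) :
    (Rt k τ p ⊗[k] M) →ₗ[Rt k τ p] (Rt k τ p ⊗[k] M) :=
  ∑ g ∈ Finset.univ.filter (fun g : τ => g ^ p = 1 ∧ g ≠ 1),
    (⟨dualElt k τ p g, dualElt_mem k τ p g⟩ : Rt k τ p) •
      LinearMap.baseChange (Rt k τ p) (ρ g - LinearMap.id)

/-- The diagonal action of `x ∈ τ` on `A_τ ⊗_k M`. -/
def diag (ρ : Representation k τ M) (x : τ) :
    (Rt k τ p ⊗[k] M) →ₗ[k] (Rt k τ p ⊗[k] M) :=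
  TensorProduct.map (actAlg k τ p x).toLinearMap (ρ x)

/-!
On a pure tensor, `x` sends the summand `(g - e)^∨ f ⊗ (g m - m)` of `Θ_{τ,M}(f ⊗ m)` to the
summand indexed by `x g x⁻¹` of `Θ_{τ,M}(x f ⊗ x m)`, because `x · (g - e)^∨ = (x g x⁻¹ - e)^∨`
in `A_τ` and `(x g x⁻¹) x = x g`. Conjugation by `x` permutes the nontrivial elements of exponent
`p`, so the two sums agree.
-/

/-- The element `(g - e)^∨` of `A_τ`. -/
abbrev dualRt (g : τ) : Rt k τ p := ⟨dualElt k τ p g, dualElt_mem k τ p g⟩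

abbrev nontrivialPElts : Finset τ := Finset.univ.filter fun g : τ => g ^ p = 1 ∧ g ≠ 1

lemma conj_mem_nontrivialPElts_iff (x g : τ) :
    x * g * x⁻¹ ∈ nontrivialPElts τ p ↔ g ∈ nontrivialPElts τ p := by
  simp only [Finset.mem_filter, Finset.mem_univ, true_and, conj_pow, ne_eq, conj_eq_one_iff]

lemma mem_conjE_iff (x g : τ) (E : ElemAb τ p) :
    g ∈ (conjE τ p x E).1 ↔ x * g * x⁻¹ ∈ E.1 :=
  Subgroup.mem_comap

lemma actAlg_dualRt (x g : τ) : actAlg k τ p x (dualRt k τ p g) = dualRt k τ p (x * g * x⁻¹) := by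
  apply Subtype.ext; funext E
  change rename (conjIdx τ p x E) (dualElt k τ p g (conjE τ p x E))
    = dualElt k τ p (x * g * x⁻¹) E
  have hmem : g ∈ (conjE τ p x E).1 ∧ g ≠ 1 ↔ x * g * x⁻¹ ∈ E.1 ∧ x * g * x⁻¹ ≠ 1 := by
    rw [mem_conjE_iff, Ne, Ne, conj_eq_one_iff]
  by_cases h : g ∈ (conjE τ p x E).1 ∧ g ≠ 1
  · rw [dualElt, dualElt, dif_pos h, dif_pos (hmem.mp h)]
    exact rename_X _ _
  · rw [dualElt, dualElt, dif_neg h, dif_neg (mt hmem.mpr h), map_zero]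

variable {k τ p}

lemma theta_tmul (ρ : Representation k τ M) (f : Rt k τ p) (m : M) :
    theta k τ p ρ (f ⊗ₜ m)
      = ∑ g ∈ nontrivialPElts τ p, (dualRt k τ p g * f) ⊗ₜ (ρ g m - m) := by
  simp only [theta, LinearMap.sum_apply, LinearMap.smul_apply, LinearMap.baseChange_tmul,
    TensorProduct.smul_tmul', smul_eq_mul, LinearMap.sub_apply, LinearMap.id_apply]

lemma diag_tmul (ρ : Representation k τ M) (x : τ) (f : Rt k τ p) (m : M) :
    diag k τ p ρ x (f ⊗ₜ m) = actAlg k τ p x f ⊗ₜ ρ x m :=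
  rfl

lemma diag_dualRt_mul_tmul (ρ : Representation k τ M) (x g : τ) (f : Rt k τ p) (m : M) :
    diag k τ p ρ x ((dualRt k τ p g * f) ⊗ₜ (ρ g m - m))
      = (dualRt k τ p (x * g * x⁻¹) * actAlg k τ p x f)
          ⊗ₜ (ρ (x * g * x⁻¹) (ρ x m) - ρ x m) := by
  rw [diag_tmul, map_mul, actAlg_dualRt, map_sub, ← Module.End.mul_apply, ← map_mul,
    ← Module.End.mul_apply, ← map_mul, inv_mul_cancel_right]

theorem geometric_invariants_stmt5_general {p : ℕ}
    (k : Type) [Field k]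
    (τ : Type) [Group τ] [Fintype τ]
    (M : Type) [AddCommGroup M] [Module k M] (ρ : Representation k τ M)
    (x : τ) (v : Rt k τ p ⊗[k] M) :
    theta k τ p ρ (diag k τ p ρ x v) = diag k τ p ρ x (theta k τ p ρ v) := by
  induction v using TensorProduct.induction_on with
  | zero => simp only [map_zero]
  | add a b ha hb => simp only [map_add, ha, hb]
  | tmul f m =>
    rw [diag_tmul, theta_tmul, theta_tmul, map_sum]
    simp only [diag_dualRt_mul_tmul]
    exact (Finset.sum_equiv (MulAut.conj x).toEquiv
      (fun g => (conj_mem_nontrivialPElts_iff τ p x g).symm) fun _ _ => rfl).symm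

/-- `Θ_{τ,M}` commutes with the diagonal `τ`-action on `A_τ ⊗_k M`
(it is `A_τ`-linear by its very type), i.e. it is an endomorphism of `A_τ ⊗_k M`
as an `A_τ#kτ`-module. -/
theorem geometric_invariants_stmt5 {p : ℕ} [Fact p.Prime]
    (k : Type) [Field k] [CharP k p]
    (τ : Type) [Group τ] [Fintype τ]
    (M : Type) [AddCommGroup M] [Module k M] (ρ : Representation k τ M)
    (x : τ) (v : Rt k τ p ⊗[k] M) :
    theta k τ p ρ (diag k τ p ρ x v) = diag k τ p ρ x (theta k τ p ρ v) :=
  geometric_invariants_stmt5_general k τ M ρ x v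
end
end

section
/- Let E be a finite elementary abelian p-group. Then the element Θ_E := Σ_{g ∈ E, g ≠ e} (g − e)^∨ ⊗ (g − e) of the k-algebra S•(J_E*) ⊗_k kE satisfies (Θ_E)^p = 0. -/
/-!
Statement 8.  For a finite elementary abelian `p`-group `E`, the element
`Θ_E = ∑_{e ≠ g ∈ E} (g-e)^∨ ⊗ (g-e)` of `S^•(J_E^*) ⊗_k kE` satisfies `Θ_E^p = 0`.
Here `S^•(J_E^*)` is modelled as the polynomial algebra on the basis
`{(g-e)^∨ : e ≠ g ∈ E}` of `J_E^*` dual to the canonical basis `{g - e : e ≠ g ∈ E}`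
of the augmentation ideal `J_E ⊆ kE`, so `(g-e)^∨` is the variable `X g`.
-/

open MvPolynomial TensorProduct

attribute [local instance] Classical.propDecidable

noncomputable section

set_option synthInstance.maxHeartbeats 400000
set_option maxHeartbeats 800000

/-- The universal operator `Θ_E = ∑_{e ≠ g ∈ E} (g-e)^∨ ⊗ (g-e)` in
`S^•(J_E^*) ⊗_k kE`. -/
def thetaE (k : Type) [Field k] (E : Type) [CommGroup E] [Fintype E] :
    MvPolynomial {g : E // g ≠ 1} k ⊗[k] MonoidAlgebra k E :=
  ∑ g : {g : E // g ≠ 1},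
    (X g : MvPolynomial {g : E // g ≠ 1} k) ⊗ₜ[k] (MonoidAlgebra.of k E g.1 - 1)

theorem MonoidAlgebra.of_sub_one_pow_char_eq_zero {k G : Type*} [CommRing k] [Monoid G]
    (p : ℕ) [Fact p.Prime] [CharP k p] {g : G} (hg : g ^ p = 1) :
    (of k G g - 1) ^ p = 0 := by
  have : CharP (MonoidAlgebra k G) p := charP_of_injective_algebraMap' k p
  rw [sub_pow_expChar_of_commute _ (Commute.one_right _), ← map_pow, hg, map_one, one_pow,
    sub_self]

theorem geometric_invariants_stmt8 {p : ℕ} [Fact p.Prime]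
    (k : Type) [Field k] [CharP k p]
    (E : Type) [CommGroup E] [Fintype E] (hE : ∀ g : E, g ^ p = 1) :
    thetaE k E ^ p = 0 := by
  have : CharP (MvPolynomial {g : E // g ≠ 1} k ⊗[k] MonoidAlgebra k E) p :=
    charP_of_injective_algebraMap' k p
  rw [thetaE, sum_pow_char]
  exact Finset.sum_eq_zero fun g _ => by
    rw [Algebra.TensorProduct.tmul_pow, MonoidAlgebra.of_sub_one_pow_char_eq_zero p (hE g),
      tmul_zero]
end
end
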